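/- arXiv:1404.1357 — 3 statements merged into one kernel-verified Lean document; each statement's English description precedes it below -/
import Mathlib

section
/- Let τ be an irrational real number and r₁, r₂ ∈ ℝ, and let G be the subgroup of diffeomorphisms of ℝ³ generated by τ₁(x,y,z) = (x+1, y+τ, z), τ₂(x,y,z) = (x, y+1, z) and τ₃(x,y,z) = (x+r₁, y+r₂, z+1). (i) If β, t ∈ ℝ and J, K : ℝ → ℝ are functions such that the bijection φ(x,y,z) = (x + βy + J(z), y − K(z), z + t) normalizes G, then β = 0. (ii) If γ, t ∈ ℝ are such that the bijection φ(x,y,z) = (x + γz, y, z + t) normalizes G, then γ = 0. -/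
/-!
Every element of `G` is a translation by a vector of the lattice
`L = ℤ(1,τ,0) + ℤ(0,1,0) + ℤ(r₁,r₂,1)`. If `φ(p + v) = φ(p) + w` for all `p`, then `φ` conjugates
translation by `v` into translation by `w`, so if `φ` normalizes `G` and `v ∈ L`, then `w ∈ L`.
In (i) `φ` conjugates `τ₂` into translation by `(β,1,0)`, in (ii) it conjugates `τ₃` into
translation by `(r₁+γ,r₂,1)`. A vector `(x,y,z) ∈ L` with `y ∈ z r₂ + ℤ` has no `(1,τ,0)`-component,
because `τ` is irrational, so `x = z r₁`; this gives `β = 0` and `r₁ + γ = r₁`.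
-/

noncomputable section

/-- The bijection `(x,y,z) ↦ (x + φ(y,z), y + ψ(z), z + b)` of `ℝ³`. -/
def affMap (φ : ℝ × ℝ → ℝ) (ψ : ℝ → ℝ) (b : ℝ) : Equiv.Perm (ℝ × ℝ × ℝ) where
  toFun p := (p.1 + φ p.2, p.2.1 + ψ p.2.2, p.2.2 + b)
  invFun p := (p.1 - φ (p.2.1 - ψ (p.2.2 - b), p.2.2 - b), p.2.1 - ψ (p.2.2 - b), p.2.2 - b)
  left_inv := by rintro ⟨x, y, z⟩; simp
  right_inv := by rintro ⟨x, y, z⟩; simp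

/-- The group `Γ_{n,c₁,c₂}`, generated by `(x,y,z) ↦ (x+1,y,z)`,
`(x,y,z) ↦ (x+c₁,y+1,z)` and `(x,y,z) ↦ (x+ny+c₂,y,z+1)`. -/
def Gamma (n : ℕ) (c₁ c₂ : ℝ) : Subgroup (Equiv.Perm (ℝ × ℝ × ℝ)) :=
  Subgroup.closure
    { affMap (fun _ => 1) (fun _ => 0) 0,
      affMap (fun _ => c₁) (fun _ => 1) 0,
      affMap (fun q => n * q.1 + c₂) (fun _ => 0) 1 }

section Translations

variable {V : Type*} [AddGroup V]

def translationSubgroup (L : AddSubgroup V) : Subgroup (Equiv.Perm V) where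
  carrier := Equiv.addRight '' L
  mul_mem' := by
    rintro _ _ ⟨v, hv, rfl⟩ ⟨w, hw, rfl⟩
    exact ⟨w + v, L.add_mem hw hv, Equiv.addRight_add w v⟩
  one_mem' := ⟨0, L.zero_mem, Equiv.addRight_zero⟩
  inv_mem' := by
    rintro _ ⟨v, hv, rfl⟩
    exact ⟨-v, L.neg_mem hv, (Equiv.neg_addRight v).symm⟩

lemma closure_image_addRight_le (S : Set V) :
    Subgroup.closure (Equiv.addRight '' S) ≤ translationSubgroup (AddSubgroup.closure S) :=
  (Subgroup.closure_le _).2 <| Set.image_mono AddSubgroup.subset_closure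

lemma conj_addRight_eq_addRight (φ : Equiv.Perm V) {v w : V} (h : ∀ p, φ (p + v) = φ p + w) :
    φ * Equiv.addRight v * φ⁻¹ = Equiv.addRight w := by
  ext q
  simpa using h (φ⁻¹ q)

lemma mem_of_mem_normalizer {L : AddSubgroup V} {H : Subgroup (Equiv.Perm V)}
    (hH : H ≤ translationSubgroup L) {φ : Equiv.Perm V} (hφ : φ ∈ Subgroup.normalizer (H : Set _))
    {v w : V} (hv : Equiv.addRight v ∈ H) (h : ∀ p, φ (p + v) = φ p + w) : w ∈ L := by
  have hconj := (Subgroup.mem_normalizer_iff.mp hφ _).mp hv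
  rw [conj_addRight_eq_addRight φ h] at hconj
  obtain ⟨u, hu, huw⟩ := hH hconj
  have : u = w := by simpa using congr($huw 0)
  exact this ▸ hu

end Translations

lemma affMap_const (a b c : ℝ) :
    affMap (fun _ => a) (fun _ => b) c = Equiv.addRight (a, b, c) :=
  Equiv.ext fun _ => rfl

def translationLattice (τ r₁ r₂ : ℝ) : AddSubgroup (ℝ × ℝ × ℝ) :=
  AddSubgroup.closure {(1, τ, 0), (0, 1, 0), (r₁, r₂, 1)}

lemma exists_int_of_mem_translationLattice {τ r₁ r₂ : ℝ} {v : ℝ × ℝ × ℝ}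
    (hv : v ∈ translationLattice τ r₁ r₂) :
    ∃ a b c : ℤ, v = (a + c * r₁, a * τ + b + c * r₂, (c : ℝ)) := by
  induction hv using AddSubgroup.closure_induction with
  | mem v hv =>
    rcases hv with rfl | rfl | rfl
    exacts [⟨1, 0, 0, by simp⟩, ⟨0, 1, 0, by simp⟩, ⟨0, 0, 1, by simp⟩]
  | zero => exact ⟨0, 0, 0, by ext <;> simp⟩
  | add v w _ _ hv hw =>
    obtain ⟨a, b, c, rfl⟩ := hv
    obtain ⟨a', b', c', rfl⟩ := hw
    refine ⟨a + a', b + b', c + c', ?_⟩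
    ext <;> simp only [Prod.fst_add, Prod.snd_add, Int.cast_add] <;> ring
  | neg v _ hv =>
    obtain ⟨a, b, c, rfl⟩ := hv
    refine ⟨-a, -b, -c, ?_⟩
    ext <;> simp only [Prod.fst_neg, Prod.snd_neg, Int.cast_neg] <;> ring

lemma fst_eq_of_mem_translationLattice {τ r₁ r₂ : ℝ} (hτ : Irrational τ) {x z : ℝ} {m : ℤ}
    (h : (x, z * r₂ + m, z) ∈ translationLattice τ r₁ r₂) : x = z * r₁ := by
  obtain ⟨a, b, c, hv⟩ := exists_int_of_mem_translationLattice h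
  simp only [Prod.mk.injEq] at hv
  obtain ⟨hx, hy, rfl⟩ := hv
  have ha : a = 0 := by
    by_contra ha
    exact (hτ.intCast_mul ha).ne_int (m - b) (by push_cast; linarith)
  simpa [ha] using hx

/-- With `G` the group of translations generated by `τ₁(x,y,z)=(x+1,y+τ,z)`,
`τ₂(x,y,z)=(x,y+1,z)`, `τ₃(x,y,z)=(x+r₁,y+r₂,z+1)` (`τ` irrational):
(i) if `φ(x,y,z) = (x + βy + J(z), y − K(z), z + t)` normalizes `G` then `β = 0`;
(ii) if `φ(x,y,z) = (x + γz, y, z + t)` normalizes `G` then `γ = 0`. -/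
theorem stmt_17 (τ : ℝ) (hτ : Irrational τ) (r₁ r₂ : ℝ)
    (G : Subgroup (Equiv.Perm (ℝ × ℝ × ℝ)))
    (hG : G = Subgroup.closure
      { affMap (fun _ => 1) (fun _ => τ) 0,
        affMap (fun _ => 0) (fun _ => 1) 0,
        affMap (fun _ => r₁) (fun _ => r₂) 1 }) :
    (∀ (β t : ℝ) (J K : ℝ → ℝ),
      affMap (fun w => β * w.1 + J w.2) (fun z => -(K z)) t ∈ Subgroup.normalizer (G : Set (Equiv.Perm (ℝ × ℝ × ℝ))) → β = 0) ∧
    (∀ γ t : ℝ, affMap (fun w => γ * w.2) (fun _ => 0) t ∈ Subgroup.normalizer (G : Set (Equiv.Perm (ℝ × ℝ × ℝ))) → γ = 0) := by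
  simp only [affMap_const] at hG
  rw [← Set.image_singleton, ← Set.image_insert_eq, ← Set.image_insert_eq] at hG
  have hGL : G ≤ translationSubgroup (translationLattice τ r₁ r₂) :=
    hG ▸ closure_image_addRight_le _
  have mem_G : ∀ v ∈ ({(1, τ, 0), (0, 1, 0), (r₁, r₂, 1)} : Set (ℝ × ℝ × ℝ)),
      Equiv.addRight v ∈ G :=
    fun v hv => hG ▸ Subgroup.subset_closure (Set.mem_image_of_mem _ hv)
  refine ⟨fun β t J K hφ => ?_, fun γ t hφ => ?_⟩
  · have hw := mem_of_mem_normalizer hGL hφ (mem_G (0, 1, 0) (by simp)) (w := (β, 1, 0))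
      (fun _ => by
        ext <;> simp only [affMap, Equiv.coe_fn_mk, Prod.fst_add, Prod.snd_add, add_zero] <;> ring)
    simpa using fst_eq_of_mem_translationLattice (x := β) (z := 0) (m := 1) hτ (by simpa using hw)
  · have hw := mem_of_mem_normalizer hGL hφ (mem_G (r₁, r₂, 1) (by simp)) (w := (r₁ + γ, r₂, 1))
      (fun _ => by
        ext <;> simp only [affMap, Equiv.coe_fn_mk, Prod.fst_add, Prod.snd_add, add_zero] <;> ring)
    have := fst_eq_of_mem_translationLattice (x := r₁ + γ) (z := 1) (m := 0) hτ (by simpa using hw)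
    linarith
end
end

section
/- Let N be a topological space and Φ : ℝ × N → N a continuous flow (Φ(0,·) = id and Φ(s+t,·) = Φ(s,·)∘Φ(t,·)) which is 1-periodic, i.e. Φ(1,·) = id. Then the formula (p,q)·(u,v,n) = (u+p, v+q, Φ(pv, n)) defines an action of ℤ² on ℝ² × N by homeomorphisms; this action is free, and it is properly discontinuous in the sense that for every compact subset K ⊆ ℝ² × N only finitely many (p,q) ∈ ℤ² satisfy ((p,q)·K) ∩ K ≠ ∅. Moreover, if N is compact, then the quotient space (ℝ² × N)/ℤ² is compact. -/
/-!
Projecting `(u, v, n) ↦ (u, v)` is equivariant onto the translation action of `ℤ²` on `ℝ²`, so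
freeness, proper discontinuity and cocompactness are inherited from the lattice `ℤ² ⊆ ℝ²`: a
compact `K` meets `a • K` only if `a` lies in the compact set of differences of projections of
points of `K`, and `[0,1]² × N` contains a point of every orbit. The flow enters only in the group
law, where composing `(p, q)` after `(p', q')` produces the extra time `p q'`, an integer, which
the `1`-periodicity of `Φ` absorbs.
-/

/-- The map of the higher-dimensional construction:
`(p,q)·(u,v,n) = (u+p, v+q, Φ(p·v, n))`. -/
def hdA {N : Type*} (Φ : ℝ × N → N) (a : ℤ × ℤ) (x : ℝ × ℝ × N) : ℝ × ℝ × N :=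
  (x.1 + a.1, x.2.1 + a.2, Φ ((a.1 : ℝ) * x.2.1, x.2.2))

open Set Filter Function

section Flow

variable {N : Type*}

theorem periodic_flow {Φ : ℝ × N → N} (hΦadd : ∀ s t : ℝ, ∀ m : N, Φ (s + t, m) = Φ (s, Φ (t, m)))
    (hΦper : ∀ m : N, Φ (1, m) = m) (m : N) : Periodic (fun s => Φ (s, m)) 1 := fun s => by
  simp only [hΦadd, hΦper]

theorem flow_add_intCast {Φ : ℝ × N → N}
    (hΦadd : ∀ s t : ℝ, ∀ m : N, Φ (s + t, m) = Φ (s, Φ (t, m)))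
    (hΦper : ∀ m : N, Φ (1, m) = m) (s : ℝ) (k : ℤ) (m : N) : Φ (s + k, m) = Φ (s, m) := by
  simpa using (periodic_flow hΦadd hΦper m).int_mul k s

end Flow

section Action

variable {N : Type*} (Φ : ℝ × N → N)

theorem hdA_zero (hΦ0 : ∀ m : N, Φ (0, m) = m) (x : ℝ × ℝ × N) : hdA Φ (0, 0) x = x := by
  simp [hdA, hΦ0]

theorem hdA_add (hΦadd : ∀ s t : ℝ, ∀ m : N, Φ (s + t, m) = Φ (s, Φ (t, m)))
    (hΦper : ∀ m : N, Φ (1, m) = m) (a b : ℤ × ℤ) (x : ℝ × ℝ × N) :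
    hdA Φ (a + b) x = hdA Φ a (hdA Φ b x) := by
  obtain ⟨p, q⟩ := a
  obtain ⟨p', q'⟩ := b
  obtain ⟨u, v, n⟩ := x
  have twist : (p : ℝ) * (v + q') + p' * v = (p + p') * v + ((p * q' : ℤ) : ℝ) := by
    push_cast; ring
  simp only [hdA, Prod.mk_add_mk, Int.cast_add, Prod.mk.injEq]
  refine ⟨by ring, by ring, ?_⟩
  rw [← hΦadd, twist, flow_add_intCast hΦadd hΦper]

theorem hdA_neg_hdA (hΦ0 : ∀ m : N, Φ (0, m) = m)
    (hΦadd : ∀ s t : ℝ, ∀ m : N, Φ (s + t, m) = Φ (s, Φ (t, m)))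
    (hΦper : ∀ m : N, Φ (1, m) = m) (a : ℤ × ℤ) (x : ℝ × ℝ × N) :
    hdA Φ (-a) (hdA Φ a x) = x := by
  rw [← hdA_add Φ hΦadd hΦper, neg_add_cancel]
  exact hdA_zero Φ hΦ0 x

theorem continuous_hdA [TopologicalSpace N] {Φ : ℝ × N → N} (hΦc : Continuous Φ) (a : ℤ × ℤ) :
    Continuous (hdA Φ a) := by
  unfold hdA
  fun_prop

theorem exists_homeomorph_coe_eq_hdA [TopologicalSpace N] (hΦc : Continuous Φ)
    (hΦ0 : ∀ m : N, Φ (0, m) = m)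
    (hΦadd : ∀ s t : ℝ, ∀ m : N, Φ (s + t, m) = Φ (s, Φ (t, m)))
    (hΦper : ∀ m : N, Φ (1, m) = m) (a : ℤ × ℤ) :
    ∃ h : (ℝ × ℝ × N) ≃ₜ (ℝ × ℝ × N), ⇑h = hdA Φ a :=
  ⟨{ toFun := hdA Φ a
     invFun := hdA Φ (-a)
     left_inv := hdA_neg_hdA Φ hΦ0 hΦadd hΦper a
     right_inv x := by simpa using hdA_neg_hdA Φ hΦ0 hΦadd hΦper (-a) x
     continuous_toFun := continuous_hdA hΦc a
     continuous_invFun := continuous_hdA hΦc (-a) }, rfl⟩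

theorem eq_zero_of_hdA_eq_self {a : ℤ × ℤ} {x : ℝ × ℝ × N} (h : hdA Φ a x = x) : a = 0 := by
  simp only [hdA, Prod.ext_iff, add_eq_left, Int.cast_eq_zero] at h
  exact Prod.ext h.1 h.2.1

theorem finite_preimage_prodMap_intCast {L : Set (ℝ × ℝ)} (hL : IsCompact L) :
    (Prod.map ((↑) : ℤ → ℝ) ((↑) : ℤ → ℝ) ⁻¹' L).Finite := by
  have : Tendsto (Prod.map ((↑) : ℤ → ℝ) ((↑) : ℤ → ℝ)) cofinite (cocompact (ℝ × ℝ)) := by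
    rw [← coprod_cofinite, ← coprod_cocompact]
    exact Int.tendsto_coe_cofinite.prodMap_coprod Int.tendsto_coe_cofinite
  exact tendsto_cofinite_cocompact_iff.mp this L hL

theorem finite_setOf_hdA_image_inter_nonempty [TopologicalSpace N] {K : Set (ℝ × ℝ × N)}
    (hK : IsCompact K) : {a : ℤ × ℤ | (hdA Φ a '' K ∩ K).Nonempty}.Finite := by
  let π : ℝ × ℝ × N → ℝ × ℝ := fun x => (x.1, x.2.1)
  have hdiff : IsCompact ((fun y : (ℝ × ℝ × N) × (ℝ × ℝ × N) => π y.2 - π y.1) '' K ×ˢ K) :=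
    (hK.prod hK).image (by fun_prop)
  refine (finite_preimage_prodMap_intCast hdiff).subset ?_
  rintro a ⟨_, ⟨x, hx, rfl⟩, hax⟩
  exact ⟨(x, hdA Φ a x), ⟨hx, hax⟩, by simp [π, hdA, Prod.map]⟩

theorem hdA_neg_floor_mem (x : ℝ × ℝ × N) :
    hdA Φ (-⌊x.1⌋, -⌊x.2.1⌋) x ∈ Icc (0 : ℝ) 1 ×ˢ Icc (0 : ℝ) 1 ×ˢ (univ : Set N) := by
  simp only [hdA, mem_prod, mem_Icc, mem_univ, and_true, Int.cast_neg]
  refine ⟨⟨?_, ?_⟩, ?_, ?_⟩ <;>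
    linarith [Int.floor_le x.1, Int.lt_floor_add_one x.1, Int.floor_le x.2.1,
      Int.lt_floor_add_one x.2.1]

theorem compactSpace_quot_hdA [TopologicalSpace N] [CompactSpace N] :
    CompactSpace (Quot fun x y : ℝ × ℝ × N => ∃ a : ℤ × ℤ, hdA Φ a x = y) := by
  have hsurj : Quot.mk (fun x y => ∃ a : ℤ × ℤ, hdA Φ a x = y) ''
      (Icc (0 : ℝ) 1 ×ˢ Icc (0 : ℝ) 1 ×ˢ (univ : Set N)) = univ := by
    refine eq_univ_of_forall fun z => Quot.inductionOn z fun x => ?_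
    exact ⟨_, hdA_neg_floor_mem Φ x, (Quot.sound ⟨_, rfl⟩).symm⟩
  rw [← isCompact_univ_iff, ← hsurj]
  exact (isCompact_Icc.prod (isCompact_Icc.prod isCompact_univ)).image continuous_quot_mk

end Action

/-- If `Φ` is a continuous 1-periodic flow on `N`, the formula
`(p,q)·(u,v,n) = (u+p, v+q, Φ(p·v, n))` defines a free, properly discontinuous action
of `ℤ²` on `ℝ² × N` by homeomorphisms, whose quotient is compact when `N` is compact. -/
theorem stmt_18 {N : Type*} [TopologicalSpace N] (Φ : ℝ × N → N)
    (hΦc : Continuous Φ)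
    (hΦ0 : ∀ m : N, Φ (0, m) = m)
    (hΦadd : ∀ s t : ℝ, ∀ m : N, Φ (s + t, m) = Φ (s, Φ (t, m)))
    (hΦper : ∀ m : N, Φ (1, m) = m) :
    (∀ x : ℝ × ℝ × N, hdA Φ (0, 0) x = x) ∧
    (∀ a b : ℤ × ℤ, ∀ x : ℝ × ℝ × N, hdA Φ (a + b) x = hdA Φ a (hdA Φ b x)) ∧
    (∀ a : ℤ × ℤ, ∃ h : (ℝ × ℝ × N) ≃ₜ (ℝ × ℝ × N), ⇑h = hdA Φ a) ∧
    (∀ (a : ℤ × ℤ) (x : ℝ × ℝ × N), hdA Φ a x = x → a = 0) ∧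
    (∀ K : Set (ℝ × ℝ × N), IsCompact K →
      {a : ℤ × ℤ | (hdA Φ a '' K ∩ K).Nonempty}.Finite) ∧
    (CompactSpace N →
      CompactSpace (Quot fun x y : ℝ × ℝ × N => ∃ a : ℤ × ℤ, hdA Φ a x = y)) :=
  ⟨hdA_zero Φ hΦ0, hdA_add Φ hΦadd hΦper,
    exists_homeomorph_coe_eq_hdA Φ hΦc hΦ0 hΦadd hΦper,
    fun _ _ => eq_zero_of_hdA_eq_self Φ,
    fun _ => finite_setOf_hdA_image_inter_nonempty Φ,
    fun _ => compactSpace_quot_hdA Φ⟩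
end

section
/- For every n ∈ ℕ and all c₁, c₂ ∈ [0,1), the group Γ_{n,c₁,c₂} acts freely on ℝ³ (no nontrivial element has a fixed point), the action is properly discontinuous (for every compact subset K ⊆ ℝ³ only finitely many γ ∈ Γ_{n,c₁,c₂} satisfy γ(K) ∩ K ≠ ∅), and the quotient space ℝ³/Γ_{n,c₁,c₂} is compact. -/
noncomputable section

/-! Every element of `Γ_{n,c₁,c₂}` is `(x,y,z) ↦ (x + nky + m + lc₁ + kc₂, y + l, z + k)` for
integers `k, l, m`, multiplied by `(k,l,m)(k',l',m') = (k+k', l+l', m+m'+nkl')`. A point and its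
image determine `(k,l,m)` through a continuous formula, which gives freeness and, by compactness
of `K × K`, proper discontinuity. Taking fractional parts of `z`, then `y`, then `x` moves every
point into `[0,1]³`, so the quotient is a continuous image of the cube. -/

open Topology

section GammaElem

variable (n : ℕ) (c₁ c₂ : ℝ)

/-- The element `a^m b^l c^k` of `Γ_{n,c₁,c₂}`, where `a`, `b`, `c` are its three generators. -/
def gammaElem (k l m : ℤ) : Equiv.Perm (ℝ × ℝ × ℝ) :=
  affMap (fun q => n * k * q.1 + (m + l * c₁ + k * c₂)) (fun _ => l) k

lemma gammaElem_apply (k l m : ℤ) (p : ℝ × ℝ × ℝ) :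
    gammaElem n c₁ c₂ k l m p =
      (p.1 + (n * k * p.2.1 + (m + l * c₁ + k * c₂)), p.2.1 + l, p.2.2 + k) :=
  rfl

lemma gammaElem_mul (k l m k' l' m' : ℤ) :
    gammaElem n c₁ c₂ k l m * gammaElem n c₁ c₂ k' l' m' =
      gammaElem n c₁ c₂ (k + k') (l + l') (m + m' + n * k * l') := by
  ext ⟨x, y, z⟩ <;> simp only [Equiv.Perm.mul_apply, gammaElem_apply] <;> push_cast <;> ring

lemma gammaElem_zero : gammaElem n c₁ c₂ 0 0 0 = 1 := by
  ext ⟨x, y, z⟩ <;> simp [gammaElem_apply]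

lemma gammaElem_inv (k l m : ℤ) :
    (gammaElem n c₁ c₂ k l m)⁻¹ = gammaElem n c₁ c₂ (-k) (-l) (n * k * l - m) := by
  refine inv_eq_of_mul_eq_one_right ?_
  rw [gammaElem_mul, ← gammaElem_zero n c₁ c₂]
  congr 1 <;> ring

lemma gammaElem_zpow {k l : ℤ} (hkl : k * l = 0) (m j : ℤ) :
    gammaElem n c₁ c₂ k l m ^ j = gammaElem n c₁ c₂ (j * k) (j * l) (j * m) := by
  induction j using Int.induction_on with
  | zero => simpa using (gammaElem_zero n c₁ c₂).symm
  | succ i ih =>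
    rw [zpow_add_one, ih, gammaElem_mul]
    congr 1 <;> [ring; ring; linear_combination (n * i : ℤ) * hkl]
  | pred i ih =>
    rw [zpow_sub_one, ih, gammaElem_inv, gammaElem_mul]
    congr 1 <;> [ring; ring; linear_combination (n * (i + 1) : ℤ) * hkl]

lemma gammaElem_eq_mul_zpow (k l m : ℤ) :
    gammaElem n c₁ c₂ k l m =
      gammaElem n c₁ c₂ 0 0 1 ^ m * gammaElem n c₁ c₂ 0 1 0 ^ l * gammaElem n c₁ c₂ 1 0 0 ^ k := by
  simp only [gammaElem_zpow, mul_zero, zero_mul, mul_one, gammaElem_mul]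
  congr 1 <;> ring

lemma Gamma_eq_closure_gammaElem :
    Gamma n c₁ c₂ = Subgroup.closure
      {gammaElem n c₁ c₂ 0 0 1, gammaElem n c₁ c₂ 0 1 0, gammaElem n c₁ c₂ 1 0 0} := by
  have ha : affMap (fun _ => 1) (fun _ => 0) 0 = gammaElem n c₁ c₂ 0 0 1 := by
    ext ⟨x, y, z⟩ <;> simp [gammaElem_apply, affMap]
  have hb : affMap (fun _ => c₁) (fun _ => 1) 0 = gammaElem n c₁ c₂ 0 1 0 := by
    ext ⟨x, y, z⟩ <;> simp [gammaElem_apply, affMap]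
  have hc : affMap (fun q => n * q.1 + c₂) (fun _ => 0) 1 = gammaElem n c₁ c₂ 1 0 0 := by
    ext ⟨x, y, z⟩ <;> simp [gammaElem_apply, affMap]
  rw [Gamma, ha, hb, hc]

lemma mem_Gamma_iff {γ : Equiv.Perm (ℝ × ℝ × ℝ)} :
    γ ∈ Gamma n c₁ c₂ ↔ ∃ k l m : ℤ, gammaElem n c₁ c₂ k l m = γ := by
  rw [Gamma_eq_closure_gammaElem]
  constructor
  · intro hγ
    induction hγ using Subgroup.closure_induction with
    | mem γ hγ =>
      rcases hγ with rfl | rfl | rfl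
      exacts [⟨0, 0, 1, rfl⟩, ⟨0, 1, 0, rfl⟩, ⟨1, 0, 0, rfl⟩]
    | one => exact ⟨0, 0, 0, gammaElem_zero n c₁ c₂⟩
    | mul _ _ _ _ ih ih' =>
      obtain ⟨k, l, m, rfl⟩ := ih
      obtain ⟨k', l', m', rfl⟩ := ih'
      exact ⟨_, _, _, (gammaElem_mul n c₁ c₂ k l m k' l' m').symm⟩
    | inv _ _ ih =>
      obtain ⟨k, l, m, rfl⟩ := ih
      exact ⟨_, _, _, (gammaElem_inv n c₁ c₂ k l m).symm⟩
  · rintro ⟨k, l, m, rfl⟩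
    rw [gammaElem_eq_mul_zpow n c₁ c₂ k l m]
    refine mul_mem (mul_mem (zpow_mem ?_ m) (zpow_mem ?_ l)) (zpow_mem ?_ k) <;>
      exact Subgroup.subset_closure (by simp)

lemma eq_zero_of_gammaElem_apply_eq_self {k l m : ℤ} {p : ℝ × ℝ × ℝ}
    (hp : gammaElem n c₁ c₂ k l m p = p) : k = 0 ∧ l = 0 ∧ m = 0 := by
  simp only [gammaElem_apply, Prod.ext_iff, add_eq_left] at hp
  obtain ⟨hx, hl, hk⟩ := hp
  simp only [Int.cast_eq_zero] at hk hl
  subst hk hl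
  simpa using hx

lemma finite_setOf_gammaElem_image_inter_nonempty {K : Set (ℝ × ℝ × ℝ)} (hK : IsCompact K) :
    {v : ℤ × ℤ × ℤ | (gammaElem n c₁ c₂ v.1 v.2.1 v.2.2 '' K ∩ K).Nonempty}.Finite := by
  -- `f (p, q)` recovers the indices of the element of `Γ` mapping `p` to `q`.
  let f : (ℝ × ℝ × ℝ) × (ℝ × ℝ × ℝ) → ℝ × ℝ × ℝ := fun pq =>
    (pq.2.2.2 - pq.1.2.2, pq.2.2.1 - pq.1.2.1,
      pq.2.1 - pq.1.1 - n * (pq.2.2.2 - pq.1.2.2) * pq.1.2.1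
        - (pq.2.2.1 - pq.1.2.1) * c₁ - (pq.2.2.2 - pq.1.2.2) * c₂)
  have hcast :
      IsClosedEmbedding (Prod.map ((↑) : ℤ → ℝ) (Prod.map ((↑) : ℤ → ℝ) ((↑) : ℤ → ℝ))) :=
    Int.isClosedEmbedding_coe_real.prodMap
      (Int.isClosedEmbedding_coe_real.prodMap Int.isClosedEmbedding_coe_real)
  have hfK : IsCompact (f '' K ×ˢ K) := (hK.prod hK).image (by fun_prop)
  refine (hcast.isCompact_preimage hfK).finite_of_discrete.subset ?_
  rintro ⟨k, l, m⟩ ⟨_, ⟨p, hp, rfl⟩, hq⟩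
  refine ⟨(p, _), ⟨hp, hq⟩, ?_⟩
  simp only [f, gammaElem_apply, Prod.map, Prod.mk.injEq]
  refine ⟨by ring, by ring, by ring⟩

lemma exists_gammaElem_apply_mem_Icc (p : ℝ × ℝ × ℝ) :
    ∃ k l m : ℤ, gammaElem n c₁ c₂ k l m p ∈ Set.Icc 0 1 := by
  obtain ⟨x, y, z⟩ := p
  set k := -⌊z⌋
  set l := -⌊y⌋
  set w := x + n * k * y + l * c₁ + k * c₂
  refine ⟨k, l, -⌊w⌋, ?_⟩
  have hfract :
      gammaElem n c₁ c₂ k l (-⌊w⌋) (x, y, z) = (Int.fract w, Int.fract y, Int.fract z) := by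
    simp only [gammaElem_apply, Int.fract, k, l, w, Int.cast_neg, Prod.mk.injEq]
    refine ⟨by ring, by ring, by ring⟩
  rw [hfract]
  exact ⟨⟨Int.fract_nonneg w, Int.fract_nonneg y, Int.fract_nonneg z⟩,
    ⟨(Int.fract_lt_one w).le, (Int.fract_lt_one y).le, (Int.fract_lt_one z).le⟩⟩

end GammaElem

theorem stmt_19_general (n : ℕ) (c₁ c₂ : ℝ) :
    (∀ γ ∈ Gamma n c₁ c₂, γ ≠ 1 → ∀ p : ℝ × ℝ × ℝ, γ p ≠ p) ∧
    (∀ K : Set (ℝ × ℝ × ℝ), IsCompact K →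
      {γ : Equiv.Perm (ℝ × ℝ × ℝ) | γ ∈ Gamma n c₁ c₂ ∧ (⇑γ '' K ∩ K).Nonempty}.Finite) ∧
    CompactSpace (Quot fun p q : ℝ × ℝ × ℝ => ∃ γ ∈ Gamma n c₁ c₂, γ p = q) := by
  refine ⟨?_, fun K hK => ?_, ⟨?_⟩⟩
  · rintro γ hγ hne p hp
    obtain ⟨k, l, m, rfl⟩ := (mem_Gamma_iff n c₁ c₂).1 hγ
    obtain ⟨rfl, rfl, rfl⟩ := eq_zero_of_gammaElem_apply_eq_self n c₁ c₂ hp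
    exact hne (gammaElem_zero n c₁ c₂)
  · refine ((finite_setOf_gammaElem_image_inter_nonempty n c₁ c₂ hK).image
      fun v => gammaElem n c₁ c₂ v.1 v.2.1 v.2.2).subset ?_
    rintro γ ⟨hγ, hmeet⟩
    obtain ⟨k, l, m, rfl⟩ := (mem_Gamma_iff n c₁ c₂).1 hγ
    exact ⟨(k, l, m), hmeet, rfl⟩
  · have hcube := (isCompact_Icc (a := (0 : ℝ × ℝ × ℝ)) (b := 1)).image
      (continuous_quot_mk (r := fun p q => ∃ γ ∈ Gamma n c₁ c₂, γ p = q))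
    refine hcube.of_isClosed_subset isClosed_univ fun x _ => Quot.ind (fun p => ?_) x
    obtain ⟨k, l, m, hmem⟩ := exists_gammaElem_apply_mem_Icc n c₁ c₂ p
    have hγ : (gammaElem n c₁ c₂ k l m)⁻¹ ∈ Gamma n c₁ c₂ :=
      inv_mem ((mem_Gamma_iff n c₁ c₂).2 ⟨k, l, m, rfl⟩)
    exact ⟨_, hmem, Quot.sound ⟨_, hγ, (gammaElem n c₁ c₂ k l m).symm_apply_apply p⟩⟩

/-- `Γ_{n,c₁,c₂}` acts freely and properly discontinuously on `ℝ³`, with compact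
quotient. -/
theorem stmt_19 (n : ℕ) (c₁ c₂ : ℝ)
    (hc₁ : c₁ ∈ Set.Ico (0 : ℝ) 1) (hc₂ : c₂ ∈ Set.Ico (0 : ℝ) 1) :
    (∀ γ ∈ Gamma n c₁ c₂, γ ≠ 1 → ∀ p : ℝ × ℝ × ℝ, γ p ≠ p) ∧
    (∀ K : Set (ℝ × ℝ × ℝ), IsCompact K →
      {γ : Equiv.Perm (ℝ × ℝ × ℝ) | γ ∈ Gamma n c₁ c₂ ∧ (⇑γ '' K ∩ K).Nonempty}.Finite) ∧
    CompactSpace (Quot fun p q : ℝ × ℝ × ℝ => ∃ γ ∈ Gamma n c₁ c₂, γ p = q) :=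
  stmt_19_general n c₁ c₂
end
end
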